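/- arXiv:1604.07240 — 2 statements merged into one kernel-verified Lean document; each statement's English description precedes it below -/
import Mathlib

section
/- For all 1 ≤ j ≤ κ the identity s_0^{+} s_j^{[+,α]} s_0^{+} = s_0^{+} Σ_{l=0}^{j-1} s_{j-1-l}^{[+,α]} s_l^{(1,α)} holds, where s_l^{(1,α)} := -s_{l+1}^{♯,α}. -/
open Matrix BigOperators

def IsMP {m n : Type*} [Fintype m] [Fintype n] (A : Matrix m n ℂ) (B : Matrix n m ℂ) : Prop :=
  A * B * A = A ∧ B * A * B = B ∧ (A * B)ᴴ = A * B ∧ (B * A)ᴴ = B * A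

open Classical in
noncomputable def mp {m n : Type*} [Fintype m] [Fintype n] (A : Matrix m n ℂ) : Matrix n m ℂ :=
  if h : ∃ B, IsMP A B then h.choose else 0

noncomputable def recip {p q : ℕ} (s : ℕ → Matrix (Fin p) (Fin q) ℂ) :
    ℕ → Matrix (Fin q) (Fin p) ℂ
  | 0 => mp (s 0)
  | (j+1) => -(mp (s 0) * ∑ l : Fin (j+1), s (j+1 - l.val) * recip s l.val)
termination_by j => j
decreasing_by exact l.isLt

noncomputable def shiftA {p q : ℕ} (α : ℂ) (s : ℕ → Matrix (Fin p) (Fin q) ℂ) :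
    ℕ → Matrix (Fin p) (Fin q) ℂ
  | 0 => s 0
  | (j+1) => (-α) • s j + s (j+1)

noncomputable def recipA {p q : ℕ} (α : ℂ) (s : ℕ → Matrix (Fin p) (Fin q) ℂ) :
    ℕ → Matrix (Fin q) (Fin p) ℂ :=
  recip (shiftA α s)

lemma mp_mul_mul {m n : Type*} [Fintype m] [Fintype n] (A : Matrix m n ℂ) :
    mp A * A * mp A = mp A := by
  unfold mp
  split
  · next h => exact h.choose_spec.2.1
  · simp

lemma recip_succ {p q : ℕ} (t : ℕ → Matrix (Fin p) (Fin q) ℂ) (j : ℕ) :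
    recip t (j+1) = -(mp (t 0) * ∑ l ∈ Finset.range (j+1), t (j+1-l) * recip t l) := by
  rw [recip]
  exact congrArg Neg.neg (congrArg _ (Fin.sum_univ_eq_sum_range
    (fun l => t (j+1-l) * recip t l) (j+1)))

/-- Lemma 5.8: s_0^+ s_j^{[+,α]} s_0^+ = s_0^+ Σ_{l=0}^{j-1} s_{j-1-l}^{[+,α]} s_l^{(1,α)}. -/
theorem stmt6 {p q : ℕ} (α : ℂ) (κ : ℕ∞) (hκ : 1 ≤ κ)
    (s : ℕ → Matrix (Fin p) (Fin q) ℂ) :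
    ∀ j : ℕ, 1 ≤ j → (j : ℕ∞) ≤ κ →
      mp (s 0) * shiftA α s j * mp (s 0) =
        mp (s 0) * ∑ l ∈ Finset.range j, shiftA α s (j - 1 - l) * (-(recipA α s (l + 1))) := by
  intro j hj _
  obtain ⟨j', rfl⟩ : ∃ j', j = j' + 1 := ⟨j - 1, (Nat.succ_pred_eq_of_pos hj).symm⟩
  set t := shiftA α s with ht
  set m := mp (s 0) with hmdef
  have h0 : t 0 = s 0 := rfl
  have hr0 : recip t 0 = m := by rw [recip, h0]
  have hmm : m * t 0 * m = m := by rw [h0]; exact mp_mul_mul (s 0)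
  have hrA : recipA α s = recip t := rfl
  have hmt0 : mp (t 0) = m := by rw [h0]
  set S := ∑ l ∈ Finset.range (j'+1), t (j'+1-l) * recip t l with hS
  have hrec : recip t (j'+1) = -(m * S) := by
    rw [recip_succ, hmt0, hS]
  have key : ∑ l ∈ Finset.range (j'+1), t (j' - l) * recip t (l+1)
      = S + t 0 * (-(m * S)) - t (j'+1) * m := by
    have h1 := Finset.sum_range_succ' (fun l => t (j'+1-l) * recip t l) (j'+1)
    have h2 := Finset.sum_range_succ (fun l => t (j'+1-l) * recip t l) (j'+1)
    simp only [Nat.succ_sub_succ_eq_sub, Nat.sub_self, Nat.sub_zero] at h1 h2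
    rw [h2, ← hS, hrec, hr0] at h1
    linear_combination (norm := abel) h1.symm
  calc m * t (j'+1) * m
      = -(m * (S + t 0 * (-(m * S)) - t (j'+1) * m)) := by
        rw [Matrix.mul_sub, Matrix.mul_add, Matrix.mul_neg, Matrix.mul_neg,
          ← Matrix.mul_assoc m (t 0) (m * S), ← Matrix.mul_assoc (m * t 0) m S, hmm,
          ← Matrix.mul_assoc m (t (j'+1)) m]
        abel
    _ = m * ∑ l ∈ Finset.range (j'+1), t (j' + 1 - 1 - l) * (-(recipA α s (l + 1))) := by
        have hsum : ∑ l ∈ Finset.range (j'+1), t (j' - l) * (-(recip t (l+1)))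
            = -(∑ l ∈ Finset.range (j'+1), t (j' - l) * recip t (l+1)) := by
          simp [mul_neg]
        simp only [hrA, Nat.add_sub_cancel]
        rw [hsum, key]
        exact (Matrix.mul_neg _ _).symm
end

section
/- If α ∈ ℝ, (t_j)_{j=0}^{κ} is an α-Stieltjes right-nonnegative definite sequence of q×q matrices, and A is a nonnegative Hermitian q×q matrix, then the inverse α-Schur transform (s_j)_{j=0}^{κ+1} corresponding to [(t_j), A] is α-Stieltjes right-nonnegative definite, i.e., belongs to K^{≥}_{q,κ+1,α}. -/
open Matrix BigOperators ComplexOrder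

/-- the inverse α-Schur transform corresponding to [(t_j), A]. -/
noncomputable def invT {p q : ℕ} (α : ℂ) (t : ℕ → Matrix (Fin p) (Fin q) ℂ)
    (A : Matrix (Fin p) (Fin q) ℂ) : ℕ → Matrix (Fin p) (Fin q) ℂ
  | 0 => A
  | (j+1) => α ^ (j + 1) • A + ∑ l : Fin (j + 1), α ^ (j - l.val) •
      (A * mp A * ∑ k : Fin (l.val + 1),
        t (l.val - k.val) * mp A *
          ((-α) • (if k.val = 0 then 0 else invT α t A (k.val - 1)) + invT α t A k.val))
termination_by j => j
decreasing_by
  · have hk := k.isLt; have hl := l.isLt; omega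
  · have hk := k.isLt; have hl := l.isLt; omega

/-- block Hankel matrix H_n = [s_{j+k}]_{j,k=0}^{n}. -/
def hankelMat {p q : ℕ} (s : ℕ → Matrix (Fin p) (Fin q) ℂ) (n : ℕ) :
    Matrix (Fin (n + 1) × Fin p) (Fin (n + 1) × Fin q) ℂ :=
  Matrix.of fun jk lm => s (jk.1.val + lm.1.val) jk.2 lm.2

/-- block Hankel matrix K_n = [s_{j+k+1}]_{j,k=0}^{n}. -/
def hankelKMat {p q : ℕ} (s : ℕ → Matrix (Fin p) (Fin q) ℂ) (n : ℕ) :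
    Matrix (Fin (n + 1) × Fin p) (Fin (n + 1) × Fin q) ℂ :=
  Matrix.of fun jk lm => s (jk.1.val + lm.1.val + 1) jk.2 lm.2

/-- the class K^{≥}_{q,κ,α} of α-Stieltjes right-nonnegative definite sequences. -/
def Kgg {q : ℕ} (α : ℝ) (κ : ℕ∞) (s : ℕ → Matrix (Fin q) (Fin q) ℂ) : Prop :=
  (∀ n : ℕ, ((2 * n : ℕ) : ℕ∞) ≤ κ → (hankelMat s n).PosSemidef) ∧
  (∀ n : ℕ, ((2 * n + 1 : ℕ) : ℕ∞) ≤ κ →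
    ((-(α : ℂ)) • hankelMat s n + hankelKMat s n).PosSemidef)

/-!
Write `s` for the inverse α-Schur transform, `u = s^{[+,α]}`, `A⁺` for the Moore–Penrose inverse
(for Hermitian `A` it is the functional calculus of `x ↦ x⁻¹`), `v k = A⁺ u k` and `w k = A⁺ s k`.
The recursion defining `s` says `u (j + 1) = A A⁺ ∑_{k ≤ j} t (j - k) v k`. Moving one index at a
time from one side of a Hankel entry to the other, this gives the congruences
  `-α H_n(s) + K_n(s) = T(v)* H_n(t) T(v)`,
  `H_{n+1}(s) = T(w)* diag(A, -α H_n(t) + K_n(t)) T(w)`,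
where `T(c)` is the upper triangular block Toeplitz matrix with first block row `c 0, …, c n`.
Both right-hand sides are nonnegative by hypothesis.
-/

theorem Fin.sum_ite_le_eq_sum_range {M : Type*} [AddCommMonoid M] {n : ℕ} (a : Fin (n + 1))
    (G : ℕ → M) :
    ∑ l : Fin (n + 1), (if l ≤ a then G l else 0) = ∑ i ∈ Finset.range (a + 1), G (a - i) := by
  have hreflect := Finset.sum_range_reflect G (a + 1)
  rw [Nat.add_sub_cancel] at hreflect
  simp only [hreflect, Fin.le_iff_val_le_val]
  rw [Fin.sum_univ_eq_sum_range (fun l => if l ≤ (a : ℕ) then G l else 0), ← Finset.sum_filter]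
  congr 1
  ext l
  simp only [Finset.mem_filter, Finset.mem_range]
  omega

namespace Matrix

theorem PosSemidef.fromBlocks_zero {m n R : Type*} [Fintype m] [Fintype n] [Ring R]
    [PartialOrder R] [StarRing R] [IsOrderedAddMonoid R] {A : Matrix m m R} {D : Matrix n n R}
    (hA : A.PosSemidef) (hD : D.PosSemidef) : (fromBlocks A 0 0 D).PosSemidef := by
  refine .of_dotProduct_mulVec_nonneg (hA.1.fromBlocks (by simp) hD.1) fun x => ?_
  obtain ⟨y, z, rfl⟩ : ∃ y z, x = Sum.elim y z := ⟨_, _, (Sum.elim_comp_inl_inr x).symm⟩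
  simp only [fromBlocks_mulVec, zero_mulVec, add_zero, zero_add, Sum.elim_comp_inl,
    Sum.elim_comp_inr, Function.star_sumElim, sumElim_dotProduct_sumElim]
  exact add_nonneg (hA.dotProduct_mulVec_nonneg _) (hD.dotProduct_mulVec_nonneg _)

theorem comp_conjTranspose_mul_mul {I J R : Type*} [Fintype I] [Fintype J]
    [NonUnitalNonAssocSemiring R] [Star R]
    (T G : Matrix I I (Matrix J J R)) :
    comp I I J J R (Tᴴ * G * T) = (comp I I J J R T)ᴴ * comp I I J J R G * comp I I J J R T := by
  simp only [← compRingEquiv_apply, map_mul]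
  rfl

def upperToeplitz {R : Type*} [Zero R] (c : ℕ → R) (n : ℕ) :
    Matrix (Fin (n + 1)) (Fin (n + 1)) R :=
  of fun i j => if i ≤ j then c (j - i) else 0

theorem upperToeplitz_conjTranspose_mul_mul_apply {R : Type*} [Semiring R] [StarRing R] {n : ℕ}
    (c : ℕ → R) (g : ℕ → ℕ → R) (a b : Fin (n + 1)) :
    ((upperToeplitz c n)ᴴ * of (fun i j : Fin (n + 1) => g i j) * upperToeplitz c n) a b =
      ∑ i ∈ Finset.range (a + 1), ∑ j ∈ Finset.range (b + 1),
        star (c i) * g (a - i) (b - j) * c j := by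
  have hterm (i j : Fin (n + 1)) :
      star (if i ≤ a then c (a - i) else 0) * g i j * (if j ≤ b then c (b - j) else 0) =
        if i ≤ a then (if j ≤ b then star (c (a - i)) * g i j * c (b - j) else 0) else 0 := by
    split_ifs <;> simp
  simp only [mul_apply, conjTranspose_apply, upperToeplitz, of_apply, Finset.sum_mul, hterm]
  rw [Finset.sum_comm]
  simp only [Finset.sum_ite_irrel, Finset.sum_const_zero]
  rw [Fin.sum_ite_le_eq_sum_range a fun i => ∑ j : Fin (n + 1),
    if j ≤ b then star (c (a - i)) * g i j * c (b - j) else 0]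
  refine Finset.sum_congr rfl fun i hi => ?_
  rw [Fin.sum_ite_le_eq_sum_range b fun j => star (c (a - (a - i))) * g (a - i) j * c (b - j)]
  refine Finset.sum_congr rfl fun j hj => ?_
  rw [Finset.mem_range] at hi hj
  rw [Nat.sub_sub_self (by omega), Nat.sub_sub_self (by omega)]

end Matrix

section MoorePenrose

variable {m n : Type*} [Fintype m] [Fintype n]

theorem IsMP.unique {A : Matrix m n ℂ} {B C : Matrix n m ℂ} (hB : IsMP A B) (hC : IsMP A C) :
    B = C := by
  obtain ⟨hABA, hBAB, hAB, hBA⟩ := hB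
  obtain ⟨hACA, hCAC, hAC, hCA⟩ := hC
  have hleft : A * B = A * C := by
    calc A * B = ((A * C) * (A * B))ᴴ := by rw [← Matrix.mul_assoc, hACA, hAB]
    _ = A * B * A * C := by rw [conjTranspose_mul, hAB, hAC, Matrix.mul_assoc (A * B)]
    _ = A * C := by rw [hABA]
  have hright : B * A = C * A := by
    calc B * A = ((B * A) * (C * A))ᴴ := by rw [Matrix.mul_assoc, ← Matrix.mul_assoc A, hACA, hBA]
    _ = C * (A * B * A) := by
      rw [conjTranspose_mul, hBA, hCA, Matrix.mul_assoc, Matrix.mul_assoc]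
    _ = C * A := by rw [hABA]
  calc B = B * A * B := hBAB.symm
  _ = C * (A * C) := by rw [hright, Matrix.mul_assoc, hleft]
  _ = C := by rw [← Matrix.mul_assoc, hCAC]

variable [DecidableEq n] {A : Matrix n n ℂ}

theorem isMP_cfc_inv (hA : A.IsHermitian) : IsMP A (cfc (·⁻¹ : ℝ → ℝ) A) := by
  have hcont (f : ℝ → ℝ) : ContinuousOn f (spectrum ℝ A) :=
    A.finite_real_spectrum.continuousOn f
  have hmul (f g : ℝ → ℝ) : cfc f A * cfc g A = cfc (fun x => f x * g x) A :=
    (cfc_mul f g A (hcont f) (hcont g)).symm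
  have hself (f : ℝ → ℝ) : (cfc f A)ᴴ = cfc f A := IsSelfAdjoint.cfc
  have hinv (x : ℝ) : x⁻¹ * x * x⁻¹ = x⁻¹ := by simpa using mul_inv_mul_cancel x⁻¹
  have key : IsMP (cfc (fun x : ℝ => x) A) (cfc (·⁻¹ : ℝ → ℝ) A) := by
    simp only [IsMP, hmul, hself, mul_inv_mul_cancel, hinv, and_self]
  rwa [cfc_id' ℝ A] at key

theorem mp_eq_cfc_inv (hA : A.IsHermitian) : mp A = cfc (·⁻¹ : ℝ → ℝ) A := by
  have hex : ∃ B, IsMP A B := ⟨_, isMP_cfc_inv hA⟩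
  rw [mp, dif_pos hex]
  exact hex.choose_spec.unique (isMP_cfc_inv hA)

theorem mul_mp_mul (hA : A.IsHermitian) : A * mp A * A = A :=
  (mp_eq_cfc_inv hA ▸ isMP_cfc_inv hA).1

theorem mp_mul_mp (hA : A.IsHermitian) : mp A * A * mp A = mp A :=
  (mp_eq_cfc_inv hA ▸ isMP_cfc_inv hA).2.1

theorem conjTranspose_mp (hA : A.IsHermitian) : (mp A)ᴴ = mp A := by
  rw [mp_eq_cfc_inv hA]
  exact IsSelfAdjoint.cfc

end MoorePenrose

section Convolution

open Finset

variable {R : Type*}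

/-- The coefficient of `z ^ (n - 1)` in `(∑ f k z ^ k) * (∑ g k z ^ k)`, so that
`cauchyConv f g 0 = 0`. -/
def cauchyConv [Semiring R] (f g : ℕ → R) (n : ℕ) : R :=
  ∑ k ∈ range n, f (n - 1 - k) * g k

theorem cauchyConv_succ_left_add [Semiring R] (f g : ℕ → R) (n : ℕ) :
    cauchyConv (fun m => f (m + 1)) g n + f 0 * g n = cauchyConv f g (n + 1) := by
  rw [cauchyConv, cauchyConv, sum_range_succ, Nat.add_sub_cancel, Nat.sub_self]
  congr 1
  refine sum_congr rfl fun k hk => ?_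
  rw [mem_range] at hk
  congr 2
  omega

theorem cauchyConv_succ_of_recurrence {K : Type*} [CommSemiring K] [Semiring R] [Algebra K R]
    (c : K) (f : ℕ → R) {v w : ℕ → R} (h0 : w 0 = v 0)
    (hsucc : ∀ j, w (j + 1) = c • w j + v (j + 1)) (n : ℕ) :
    cauchyConv f w (n + 1) = c • cauchyConv f w n + cauchyConv f v (n + 1) := by
  rw [cauchyConv, cauchyConv, cauchyConv, Nat.add_sub_cancel, sum_range_succ',
    sum_range_succ' (fun k => f (n - k) * v k), h0]
  simp only [hsucc, mul_add, mul_smul_comm, sum_add_distrib, ← smul_sum, Nat.sub_sub, add_comm 1,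
    add_assoc]

theorem cauchyConv_congr_left [Semiring R] {f f' : ℕ → R} (g : ℕ → R) {n : ℕ}
    (h : ∀ k < n, f k = f' k) : cauchyConv f g n = cauchyConv f' g n :=
  sum_congr rfl fun k hk => by rw [h _ (by rw [mem_range] at hk; omega)]

end Convolution

section HankelForm

open Finset

variable {R : Type*}

def hankelForm [Semiring R] [Star R] (x g : ℕ → R) (a b : ℕ) : R :=
  ∑ i ∈ range a, ∑ j ∈ range b, star (x i) * g (a - 1 - i + (b - 1 - j)) * x j

theorem hankelForm_add_star_mul_cauchyConv [Semiring R] [StarRing R] (x g : ℕ → R) (a b : ℕ) :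
    hankelForm x g a (b + 1) + star (x a) * cauchyConv g x b =
      hankelForm x g (a + 1) b + star (cauchyConv (fun k => star (g k)) x a) * x b := by
  have hinner : ∀ i ∈ range a, ∑ j ∈ range b, star (x i) * g (a - 1 - i + (b + 1 - 1 - j)) * x j
      = ∑ j ∈ range b, star (x i) * g (a + 1 - 1 - i + (b - 1 - j)) * x j := by
    intro i hi
    refine sum_congr rfl fun j hj => ?_
    rw [mem_range] at hi hj
    congr 3
    omega
  simp only [hankelForm, cauchyConv, sum_range_succ _ a, sum_range_succ _ b, sum_add_distrib,
    star_sum, star_mul, star_star, mul_sum, sum_mul, ← mul_assoc]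
  rw [sum_congr rfl hinner]
  simp only [Nat.add_sub_cancel, Nat.sub_self, add_zero, zero_add]
  exact add_right_comm _ _ _

/-- The blocks of `diag(A, [g (i + j)]ᵢⱼ)`. -/
def borderKernel [Zero R] (A : R) (g : ℕ → R) : ℕ → ℕ → R
  | 0, 0 => A
  | 0, _ + 1 => 0
  | _ + 1, 0 => 0
  | i + 1, j + 1 => g (i + j)

theorem sum_star_mul_borderKernel_mul [Semiring R] [Star R] (A : R) (x g : ℕ → R) (a b : ℕ) :
    ∑ i ∈ range (a + 1), ∑ j ∈ range (b + 1), star (x i) * borderKernel A g (a - i) (b - j) * x j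
      = star (x a) * A * x b + hankelForm x g a b := by
  have hcorner : ∀ i ∈ range a, ∑ j ∈ range b,
      star (x i) * borderKernel A g (a - i) (b - j) * x j =
      ∑ j ∈ range b, star (x i) * g (a - 1 - i + (b - 1 - j)) * x j := by
    intro i hi
    refine sum_congr rfl fun j hj => ?_
    rw [mem_range] at hi hj
    rw [show a - i = a - 1 - i + 1 by omega, show b - j = b - 1 - j + 1 by omega, borderKernel]
  have hedge (i : ℕ) (hi : i ∈ range a) :
      star (x i) * borderKernel A g (a - i) 0 * x b = 0 := by
    rw [mem_range] at hi
    rw [show a - i = a - 1 - i + 1 by omega, borderKernel, mul_zero, zero_mul]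
  have hedge' (j : ℕ) (hj : j ∈ range b) :
      star (x a) * borderKernel A g 0 (b - j) * x j = 0 := by
    rw [mem_range] at hj
    rw [show b - j = b - 1 - j + 1 by omega, borderKernel, mul_zero, zero_mul]
  simp only [sum_range_succ _ a, sum_range_succ _ b, sum_add_distrib, Nat.sub_self]
  rw [sum_congr rfl hcorner, sum_eq_zero hedge, sum_eq_zero hedge', borderKernel, hankelForm,
    zero_add, add_zero, add_comm]

end HankelForm

section Hankel

variable {p q : ℕ}

theorem hankelMat_eq_comp (g : ℕ → Matrix (Fin p) (Fin q) ℂ) (n : ℕ) :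
    hankelMat g n = comp _ _ _ _ ℂ (of fun i j : Fin (n + 1) => g (i + j)) :=
  rfl

theorem conjTranspose_eq_of_isHermitian_hankelMat {g : ℕ → Matrix (Fin q) (Fin q) ℂ} {n : ℕ}
    (h : (hankelMat g n).IsHermitian) {k : ℕ} (hk : k ≤ n) : (g k)ᴴ = g k := by
  ext x y
  simpa [hankelMat] using congrFun₂ h (⟨k, by omega⟩, x) (0, y)

theorem neg_smul_hankelMat_add_hankelKMat (c : ℂ) (f : ℕ → Matrix (Fin p) (Fin q) ℂ) (n : ℕ) :
    (-c) • hankelMat f n + hankelKMat f n = hankelMat (fun m => shiftA c f (m + 1)) n := by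
  ext
  simp [hankelMat, hankelKMat, shiftA]

theorem shiftA_eq_ite (α : ℂ) (f : ℕ → Matrix (Fin p) (Fin q) ℂ) (k : ℕ) :
    (-α) • (if k = 0 then 0 else f (k - 1)) + f k = shiftA α f k := by
  cases k <;> simp [shiftA]

theorem posSemidef_comp_borderKernel {A : Matrix (Fin q) (Fin q) ℂ}
    {g : ℕ → Matrix (Fin q) (Fin q) ℂ} {m : ℕ} (hA : A.PosSemidef)
    (hg : (hankelMat g m).PosSemidef) :
    (comp _ _ _ _ ℂ (of fun i j : Fin (m + 2) => borderKernel A g i j)).PosSemidef := by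
  let e : Fin (m + 2) × Fin q → Fin q ⊕ (Fin (m + 1) × Fin q) := fun p =>
    Fin.cases (motive := fun _ => Fin q ⊕ (Fin (m + 1) × Fin q)) (.inl p.2)
      (fun i => .inr (i, p.2)) p.1
  have heq : comp _ _ _ _ ℂ (of fun i j : Fin (m + 2) => borderKernel A g i j) =
      (fromBlocks A 0 0 (hankelMat g m)).submatrix e e := by
    ext ⟨i, x⟩ ⟨j, y⟩
    cases i using Fin.cases <;> cases j using Fin.cases <;> simp [e, borderKernel, hankelMat]
  rw [heq]
  exact (hA.fromBlocks_zero hg).submatrix e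

end Hankel

section InverseSchurTransform

open Finset

variable {q : ℕ} (α : ℂ) (t : ℕ → Matrix (Fin q) (Fin q) ℂ) (A : Matrix (Fin q) (Fin q) ℂ)

noncomputable def pinvShiftInvT (k : ℕ) : Matrix (Fin q) (Fin q) ℂ :=
  mp A * shiftA α (invT α t A) k

noncomputable def pinvInvT (k : ℕ) : Matrix (Fin q) (Fin q) ℂ :=
  mp A * invT α t A k

theorem invT_zero : invT α t A 0 = A := by
  rw [invT]

theorem invT_succ_eq_sum (j : ℕ) :
    invT α t A (j + 1) = α ^ (j + 1) • A + ∑ l ∈ range (j + 1),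
      α ^ (j - l) • (A * mp A * cauchyConv t (pinvShiftInvT α t A) (l + 1)) := by
  rw [invT, ← Fin.sum_univ_eq_sum_range]
  congr 1
  refine Fintype.sum_congr _ _ fun l => ?_
  simp only [cauchyConv, Nat.add_sub_cancel, pinvShiftInvT, shiftA_eq_ite, Matrix.mul_assoc,
    ← Fin.sum_univ_eq_sum_range (fun k => t (l - k) * (mp A * shiftA α (invT α t A) k))]

theorem invT_succ (j : ℕ) :
    invT α t A (j + 1) =
      α • invT α t A j + A * mp A * cauchyConv t (pinvShiftInvT α t A) (j + 1) := by
  cases j with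
  | zero => simp [invT_succ_eq_sum, invT_zero]
  | succ j =>
    rw [invT_succ_eq_sum, invT_succ_eq_sum, sum_range_succ, Nat.sub_self, pow_zero, one_smul,
      smul_add, smul_sum, smul_smul, ← pow_succ', ← add_assoc]
    congr 2
    refine sum_congr rfl fun l hl => ?_
    rw [smul_smul, ← pow_succ', Nat.sub_add_comm (Nat.le_of_lt_succ (mem_range.1 hl))]

theorem shiftA_invT_succ (j : ℕ) :
    shiftA α (invT α t A) (j + 1) = A * mp A * cauchyConv t (pinvShiftInvT α t A) (j + 1) := by
  rw [shiftA, invT_succ, neg_smul, neg_add_cancel_left]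

theorem pinvShiftInvT_zero : pinvShiftInvT α t A 0 = mp A * A := by
  rw [pinvShiftInvT, shiftA, invT_zero]

theorem pinvInvT_zero : pinvInvT α t A 0 = mp A * A := by
  rw [pinvInvT, invT_zero]

variable {A} (hA : A.IsHermitian)
include hA

theorem mul_mp_mul_invT (k : ℕ) : A * mp A * invT α t A k = invT α t A k := by
  have hproj : A * mp A * (A * mp A) = A * mp A := by
    rw [← Matrix.mul_assoc, mul_mp_mul hA]
  induction k with
  | zero => rw [invT_zero, mul_mp_mul hA]
  | succ k ih => rw [invT_succ, Matrix.mul_add, Matrix.mul_smul, ih, ← Matrix.mul_assoc, hproj]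

theorem pinvShiftInvT_succ (j : ℕ) :
    pinvShiftInvT α t A (j + 1) = mp A * cauchyConv t (pinvShiftInvT α t A) (j + 1) := by
  rw [pinvShiftInvT, shiftA_invT_succ, ← Matrix.mul_assoc, ← Matrix.mul_assoc, mp_mul_mp hA]

theorem pinvInvT_succ (j : ℕ) :
    pinvInvT α t A (j + 1) = α • pinvInvT α t A j + pinvShiftInvT α t A (j + 1) := by
  rw [pinvInvT, pinvInvT, invT_succ, Matrix.mul_add, Matrix.mul_smul, ← Matrix.mul_assoc,
    ← Matrix.mul_assoc, mp_mul_mp hA, pinvShiftInvT_succ α t hA]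

theorem cauchyConv_shiftA_pinvInvT_add (n : ℕ) :
    cauchyConv (fun m => shiftA α t (m + 1)) (pinvInvT α t A) n + t 0 * pinvInvT α t A n =
      cauchyConv t (pinvShiftInvT α t A) (n + 1) := by
  have hsplit : cauchyConv (fun m => shiftA α t (m + 1)) (pinvInvT α t A) n =
      (-α) • cauchyConv t (pinvInvT α t A) n +
        cauchyConv (fun m => t (m + 1)) (pinvInvT α t A) n := by
    simp only [cauchyConv, shiftA, add_mul, smul_mul_assoc, sum_add_distrib, smul_sum]
  rw [hsplit, add_assoc, cauchyConv_succ_left_add,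
    cauchyConv_succ_of_recurrence α t (by rw [pinvInvT_zero, pinvShiftInvT_zero])
      (pinvInvT_succ α t hA), neg_smul, neg_add_cancel_left]

end InverseSchurTransform

section HankelIdentities

open Finset

variable {q : ℕ} (α : ℂ) (t : ℕ → Matrix (Fin q) (Fin q) ℂ) {A : Matrix (Fin q) (Fin q) ℂ}

theorem star_pinvShiftInvT_succ_mul_cauchyConv (hA : A.IsHermitian) (a b : ℕ) :
    star (pinvShiftInvT α t A (a + 1)) * cauchyConv t (pinvShiftInvT α t A) (b + 1) =
      star (cauchyConv t (pinvShiftInvT α t A) (a + 1)) * pinvShiftInvT α t A (b + 1) := by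
  simp only [pinvShiftInvT_succ α t hA, star_eq_conjTranspose, conjTranspose_mul,
    conjTranspose_mp hA, Matrix.mul_assoc]

theorem shiftA_invT_eq_hankelForm (hA : A.IsHermitian) (a b : ℕ) (ht : ∀ k < a, (t k)ᴴ = t k) :
    shiftA α (invT α t A) (a + b + 1) = hankelForm (pinvShiftInvT α t A) t (a + 1) (b + 1) := by
  induction a generalizing b with
  | zero =>
    have hstar : star (pinvShiftInvT α t A 0) = A * mp A := by
      rw [pinvShiftInvT_zero, star_eq_conjTranspose, conjTranspose_mul, conjTranspose_mp hA, hA.eq]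
    simp only [hankelForm, zero_add, sum_range_one, hstar, Nat.sub_self, Nat.add_sub_cancel,
      Matrix.mul_assoc, ← mul_sum, shiftA_invT_succ, cauchyConv]
  | succ a ih =>
    have hconv : cauchyConv (fun k => star (t k)) (pinvShiftInvT α t A) (a + 1) =
        cauchyConv t (pinvShiftInvT α t A) (a + 1) :=
      cauchyConv_congr_left _ fun k hk => ht k hk
    have htransfer := hankelForm_add_star_mul_cauchyConv (pinvShiftInvT α t A) t (a + 1) (b + 1)
    rw [hconv, ← star_pinvShiftInvT_succ_mul_cauchyConv α t hA] at htransfer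
    rw [show a + 1 + b + 1 = a + (b + 1) + 1 by ring, ih (b + 1) fun k hk => ht k (by omega)]
    exact add_right_cancel htransfer

theorem star_pinvInvT_mul_mul_succ (hA : A.IsHermitian) (a b : ℕ) :
    star (pinvInvT α t A a) * A * pinvInvT α t A (b + 1) =
      α • (star (pinvInvT α t A a) * A * pinvInvT α t A b) +
        star (pinvInvT α t A a) * cauchyConv t (pinvShiftInvT α t A) (b + 1) := by
  have hproj : star (pinvInvT α t A a) * A * mp A = star (pinvInvT α t A a) := by
    simp only [pinvInvT, star_eq_conjTranspose, conjTranspose_mul, conjTranspose_mp hA,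
      Matrix.mul_assoc, mp_mul_mp hA]
  rw [pinvInvT_succ α t hA, pinvShiftInvT_succ α t hA, Matrix.mul_add, Matrix.mul_smul,
    ← Matrix.mul_assoc _ (mp A), hproj]

theorem star_pinvInvT_mul_mul_add_star_cauchyConv (hA : A.IsHermitian) (hα : star α = α)
    (ht0 : (t 0)ᴴ = t 0) (a b : ℕ) :
    star (pinvInvT α t A a) * A * pinvInvT α t A (b + 1) +
        star (cauchyConv (fun m => shiftA α t (m + 1)) (pinvInvT α t A) a) * pinvInvT α t A b =
      star (pinvInvT α t A (a + 1)) * A * pinvInvT α t A b +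
        star (pinvInvT α t A a) * cauchyConv (fun m => shiftA α t (m + 1)) (pinvInvT α t A) b := by
  have hAstar : star A = A := hA
  have ht0star : star (t 0) = t 0 := ht0
  have hconv (n : ℕ) := eq_sub_of_add_eq (cauchyConv_shiftA_pinvInvT_add α t hA n)
  have hleft : star (pinvInvT α t A (a + 1)) * A * pinvInvT α t A b =
      α • (star (pinvInvT α t A a) * A * pinvInvT α t A b) +
        star (cauchyConv t (pinvShiftInvT α t A) (a + 1)) * pinvInvT α t A b := by
    have h := congrArg star (star_pinvInvT_mul_mul_succ α t hA b a)
    simp only [star_mul, star_add, star_smul, star_star, hAstar, hα, Matrix.mul_assoc] at h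
    simpa only [Matrix.mul_assoc] using h
  rw [star_pinvInvT_mul_mul_succ α t hA, hleft, hconv, hconv]
  simp only [star_sub, star_mul, ht0star, Matrix.mul_sub, Matrix.sub_mul, Matrix.mul_assoc]
  abel

theorem invT_eq_hankelForm (hA : A.IsHermitian) (hα : star α = α) (ht0 : (t 0)ᴴ = t 0)
    (a b : ℕ) (hr : ∀ k < a, (shiftA α t (k + 1))ᴴ = shiftA α t (k + 1)) :
    invT α t A (a + b) = star (pinvInvT α t A a) * A * pinvInvT α t A b +
      hankelForm (pinvInvT α t A) (fun m => shiftA α t (m + 1)) a b := by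
  induction a generalizing b with
  | zero =>
    have hstar : star (pinvInvT α t A 0) = A * mp A := by
      rw [pinvInvT_zero, star_eq_conjTranspose, conjTranspose_mul, conjTranspose_mp hA, hA.eq]
    rw [zero_add, hankelForm, sum_range_zero, add_zero, hstar, pinvInvT, Matrix.mul_assoc,
      ← Matrix.mul_assoc A, mul_mp_mul_invT α t hA, mul_mp_mul_invT α t hA]
  | succ a ih =>
    have htransfer := hankelForm_add_star_mul_cauchyConv (pinvInvT α t A)
      (fun m => shiftA α t (m + 1)) a b
    have hconv : cauchyConv (fun k => star (shiftA α t (k + 1))) (pinvInvT α t A) a =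
        cauchyConv (fun k => shiftA α t (k + 1)) (pinvInvT α t A) a :=
      cauchyConv_congr_left _ fun k hk => hr k (by omega)
    rw [hconv] at htransfer
    have hkey := star_pinvInvT_mul_mul_add_star_cauchyConv α t hA hα ht0 a b
    rw [show a + 1 + b = a + (b + 1) by ring, ih (b + 1) fun k hk => hr k (by omega),
      eq_sub_of_add_eq htransfer, eq_sub_of_add_eq hkey]
    abel

end HankelIdentities

section Positivity

variable {q : ℕ} (α : ℂ) (t : ℕ → Matrix (Fin q) (Fin q) ℂ) {A : Matrix (Fin q) (Fin q) ℂ}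

theorem hankelMat_shiftA_invT_eq (hA : A.IsHermitian) {n : ℕ} (ht : ∀ k ≤ n, (t k)ᴴ = t k) :
    hankelMat (fun m => shiftA α (invT α t A) (m + 1)) n =
      (comp _ _ _ _ ℂ (upperToeplitz (pinvShiftInvT α t A) n))ᴴ * hankelMat t n *
        comp _ _ _ _ ℂ (upperToeplitz (pinvShiftInvT α t A) n) := by
  rw [hankelMat_eq_comp, hankelMat_eq_comp, ← comp_conjTranspose_mul_mul]
  congr 1
  ext a b : 1
  rw [upperToeplitz_conjTranspose_mul_mul_apply _ fun i j => t (i + j), of_apply,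
    shiftA_invT_eq_hankelForm α t hA a b fun k hk => ht k (by omega)]
  simp only [hankelForm, Nat.add_sub_cancel]

theorem hankelMat_invT_succ_eq (hA : A.IsHermitian) (hα : star α = α) (ht0 : (t 0)ᴴ = t 0)
    {m : ℕ} (hr : ∀ k ≤ m, (shiftA α t (k + 1))ᴴ = shiftA α t (k + 1)) :
    hankelMat (invT α t A) (m + 1) =
      (comp _ _ _ _ ℂ (upperToeplitz (pinvInvT α t A) (m + 1)))ᴴ *
        comp _ _ _ _ ℂ
          (of fun i j : Fin (m + 2) => borderKernel A (fun k => shiftA α t (k + 1)) i j) *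
        comp _ _ _ _ ℂ (upperToeplitz (pinvInvT α t A) (m + 1)) := by
  rw [hankelMat_eq_comp, ← comp_conjTranspose_mul_mul]
  congr 1
  ext a b : 1
  rw [upperToeplitz_conjTranspose_mul_mul_apply, sum_star_mul_borderKernel_mul, of_apply,
    invT_eq_hankelForm α t hA hα ht0 a b fun k hk => hr k (by omega)]

theorem posSemidef_hankelMat_invT_zero (hA : A.PosSemidef) :
    (hankelMat (invT α t A) 0).PosSemidef := by
  have heq : hankelMat (invT α t A) 0 = A.submatrix Prod.snd Prod.snd := by
    ext ⟨i, x⟩ ⟨j, y⟩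
    simp [hankelMat, Fin.fin_one_eq_zero, invT_zero]
  rw [heq]
  exact hA.submatrix _

theorem posSemidef_hankelMat_invT_succ (hA : A.PosSemidef) (hα : star α = α) (ht0 : (t 0)ᴴ = t 0)
    {m : ℕ} (hr : ((-α) • hankelMat t m + hankelKMat t m).PosSemidef) :
    (hankelMat (invT α t A) (m + 1)).PosSemidef := by
  rw [neg_smul_hankelMat_add_hankelKMat] at hr
  rw [hankelMat_invT_succ_eq α t hA.1 hα ht0 fun k hk =>
    conjTranspose_eq_of_isHermitian_hankelMat hr.1 hk]
  exact (posSemidef_comp_borderKernel hA hr).conjTranspose_mul_mul_same _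

theorem posSemidef_shiftHankel_invT (hA : A.IsHermitian) {n : ℕ}
    (ht : (hankelMat t n).PosSemidef) :
    ((-α) • hankelMat (invT α t A) n + hankelKMat (invT α t A) n).PosSemidef := by
  rw [neg_smul_hankelMat_add_hankelKMat, hankelMat_shiftA_invT_eq α t hA fun k hk =>
    conjTranspose_eq_of_isHermitian_hankelMat ht.1 hk]
  exact ht.conjTranspose_mul_mul_same _

end Positivity

theorem ENat.natCast_le_of_natCast_succ_le_add_one {k : ℕ} {κ : ℕ∞}
    (h : ((k + 1 : ℕ) : ℕ∞) ≤ κ + 1) : (k : ℕ∞) ≤ κ := by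
  rw [Nat.cast_succ] at h
  exact (ENat.add_le_add_iff_right ENat.one_ne_top).1 h

/-- Proposition 10.15: the inverse α-Schur transform of an α-Stieltjes
    right-nonnegative definite sequence with nonnegative Hermitian first matrix A
    is again α-Stieltjes right-nonnegative definite. -/
theorem stmt19 {q : ℕ} (α : ℝ) (κ : ℕ∞)
    (t : ℕ → Matrix (Fin q) (Fin q) ℂ) (A : Matrix (Fin q) (Fin q) ℂ)
    (ht : Kgg α κ t) (hA : A.PosSemidef) :
    Kgg α (κ + 1) (invT (α : ℂ) t A) := by
  refine ⟨fun n hn => ?_, fun n hn => posSemidef_shiftHankel_invT _ t hA.1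
    (ht.1 n (ENat.natCast_le_of_natCast_succ_le_add_one hn))⟩
  cases n with
  | zero => exact posSemidef_hankelMat_invT_zero _ t hA
  | succ m =>
    have hκ : ((2 * m + 1 : ℕ) : ℕ∞) ≤ κ :=
      ENat.natCast_le_of_natCast_succ_le_add_one (by rwa [show 2 * m + 1 + 1 = 2 * (m + 1) by ring])
    have ht0 : (t 0)ᴴ = t 0 :=
      conjTranspose_eq_of_isHermitian_hankelMat (ht.1 0 (by simp)).1 le_rfl
    exact posSemidef_hankelMat_invT_succ _ t hA (Complex.conj_ofReal α) ht0 (ht.2 m hκ)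
end
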